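/- arXiv:1807.07680 — 7 statements merged into one kernel-verified Lean document; each statement's English description precedes it below -/
import Mathlib

section
/- Let l : ℝ → ℝ be strictly convex and γ-smooth (its derivative is γ-Lipschitz) for some γ > 0, with convex conjugate l*. Let w̄ be a point at which l* is differentiable, let η ∈ (0,1] and v ∈ ℝ. Then any minimizer w⁺ of the one-dimensional problem min_w { −η(v − (l*)'(w̄))·w + D_{l*}(w, w̄) } satisfies (l*)'(w⁺) = (1−η)(l*)'(w̄) + η·v, and consequently w⁺ = l'((1−η)(l*)'(w̄) + η·v). -/
/-- The convex conjugate of a univariate function. -/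
noncomputable def conj (f : ℝ → ℝ) (w : ℝ) : ℝ :=
  sSup (Set.range fun s => w * s - f s)

/-- The effective domain of the convex conjugate of `f`. -/
def domConj (f : ℝ → ℝ) : Set ℝ :=
  {w | BddAbove (Set.range fun s => w * s - f s)}

/-!
Write `t = (1 - η) (l*)'(w̄) + η v`. Up to an additive constant the objective is
`l*(w) - t w`, so `w⁺` maximizes `t w - l*(w)`. By the Fenchel–Young equality
`l*(l'(t)) = l'(t) t - l(t)` this maximum is `l(t)`, so `w⁺` is a supporting slope of `l`
at `t`, i.e. `w⁺ = l'(t)`.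

For the derivative of `l*` at `l'(t)`: when `w = l'(x)`, the tangent-line inequalities of `l`
at `x` and at `t` squeeze `l*(w) - l*(l'(t)) - t (w - l'(t))` between `0` and `(x - t)(w - l'(t))`.
Since `l'` is strictly increasing and has the intermediate value property (Darboux), every
`w` close to `l'(t)` is `l'(x)` for some `x` close to `t`.
-/

open Set Filter Topology

variable {l : ℝ → ℝ}

lemma ConvexOn.add_deriv_mul_sub_le (hc : ConvexOn ℝ univ l) {t : ℝ}
    (hd : DifferentiableAt ℝ l t) (s : ℝ) :
    l t + deriv l t * (s - t) ≤ l s := by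
  rcases lt_trichotomy s t with h | rfl | h
  · have h2 := hc.slope_le_deriv (mem_univ s) (mem_univ t) h hd
    rw [slope_def_field, div_le_iff₀ (by linarith)] at h2
    linarith
  · simp
  · have h2 := hc.deriv_le_slope (mem_univ t) (mem_univ s) h hd
    rw [slope_def_field, le_div_iff₀ (by linarith)] at h2
    linarith

lemma eq_deriv_of_forall_add_mul_sub_le {t m : ℝ} (hd : DifferentiableAt ℝ l t)
    (h : ∀ s, l t + m * (s - t) ≤ l s) : m = deriv l t := by
  have hmin : IsLocalMin (fun s => l s - m * s) t :=
    Eventually.of_forall fun s => by linarith [h s]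
  have hderiv : HasDerivAt (fun s => l s - m * s) (deriv l t - m) t :=
    (hd.hasDerivAt.sub ((hasDerivAt_id t).const_mul m)).congr_deriv (by ring)
  linarith [hmin.hasDerivAt_eq_zero hderiv]

lemma mul_sub_le_conj {w : ℝ} (hw : w ∈ domConj l) (s : ℝ) : w * s - l s ≤ conj l w :=
  le_csSup hw ⟨s, rfl⟩

lemma isGreatest_deriv_mul_sub (hc : ConvexOn ℝ univ l) {t : ℝ}
    (hd : DifferentiableAt ℝ l t) :
    IsGreatest (range fun s => deriv l t * s - l s) (deriv l t * t - l t) := by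
  refine ⟨⟨t, rfl⟩, ?_⟩
  rintro _ ⟨s, rfl⟩
  linarith [hc.add_deriv_mul_sub_le hd s]

lemma deriv_mem_domConj (hc : ConvexOn ℝ univ l) {t : ℝ} (hd : DifferentiableAt ℝ l t) :
    deriv l t ∈ domConj l :=
  (isGreatest_deriv_mul_sub hc hd).bddAbove

lemma conj_deriv (hc : ConvexOn ℝ univ l) {t : ℝ} (hd : DifferentiableAt ℝ l t) :
    conj l (deriv l t) = deriv l t * t - l t :=
  (isGreatest_deriv_mul_sub hc hd).csSup_eq

lemma eq_deriv_of_conj_sub_mul_le (hc : ConvexOn ℝ univ l) {t w : ℝ}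
    (hd : DifferentiableAt ℝ l t) (hw : w ∈ domConj l)
    (hopt : conj l w - t * w ≤ conj l (deriv l t) - t * deriv l t) :
    w = deriv l t := by
  have hconj : conj l w ≤ w * t - l t := by
    rw [conj_deriv hc hd] at hopt
    linarith
  refine eq_deriv_of_forall_add_mul_sub_le hd fun s => ?_
  linarith [mul_sub_le_conj hw s]

lemma abs_conj_deriv_sub_le (hc : ConvexOn ℝ univ l) (hd : Differentiable ℝ l) (t x : ℝ) :
    |conj l (deriv l x) - conj l (deriv l t) - t * (deriv l x - deriv l t)|
      ≤ |x - t| * |deriv l x - deriv l t| := by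
  have hx := hc.add_deriv_mul_sub_le (hd x) t
  have ht := hc.add_deriv_mul_sub_le (hd t) x
  rw [conj_deriv hc (hd x), conj_deriv hc (hd t), ← abs_mul]
  have hlower : 0 ≤ deriv l x * x - l x - (deriv l t * t - l t) - t * (deriv l x - deriv l t) := by
    linarith
  have hupper : deriv l x * x - l x - (deriv l t * t - l t) - t * (deriv l x - deriv l t)
      ≤ (x - t) * (deriv l x - deriv l t) := by
    linarith
  rw [abs_of_nonneg hlower]
  exact hupper.trans (le_abs_self _)

lemma image_deriv_Icc_mem_nhds (hsc : StrictConvexOn ℝ univ l) (hd : Differentiable ℝ l)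
    {a b t : ℝ} (hat : a < t) (htb : t < b) :
    deriv l '' Icc a b ∈ 𝓝 (deriv l t) := by
  have hmono := hsc.strictMonoOn_deriv fun x _ => hd x
  have hIcc : Icc (deriv l a) (deriv l b) ⊆ deriv l '' Icc a b :=
    (ordConnected_Icc.image_deriv fun x _ => hd x).out
      (mem_image_of_mem _ (left_mem_Icc.2 (hat.trans htb).le))
      (mem_image_of_mem _ (right_mem_Icc.2 (hat.trans htb).le))
  exact mem_of_superset (Icc_mem_nhds (hmono trivial trivial hat) (hmono trivial trivial htb)) hIcc

theorem hasDerivAt_conj_deriv (hsc : StrictConvexOn ℝ univ l) (hd : Differentiable ℝ l)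
    (t : ℝ) : HasDerivAt (conj l) t (deriv l t) := by
  rw [hasDerivAt_iff_isLittleO, Asymptotics.isLittleO_iff]
  intro c hc
  filter_upwards [image_deriv_Icc_mem_nhds hsc hd (sub_lt_self t hc) (lt_add_of_pos_right t hc)]
    with w ⟨x, hx, hxw⟩
  subst hxw
  have hxt : |x - t| ≤ c := abs_sub_le_iff.2 ⟨by linarith [hx.2], by linarith [hx.1]⟩
  simp only [Real.norm_eq_abs, smul_eq_mul, mul_comm _ t]
  calc _ ≤ |x - t| * |deriv l x - deriv l t| := abs_conj_deriv_sub_le hsc.convexOn hd t x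
    _ ≤ c * |deriv l x - deriv l t| := by gcongr

theorem stmt0_general (l : ℝ → ℝ)
    (hdiff : Differentiable ℝ l)
    (hsc : StrictConvexOn ℝ Set.univ l)
    (wbar : ℝ)
    (η : ℝ) (v : ℝ)
    (wplus : ℝ) (hwplusdom : wplus ∈ domConj l)
    (hmin : ∀ w ∈ domConj l,
      -(η * (v - deriv (conj l) wbar)) * wplus
          + (conj l wplus - conj l wbar - deriv (conj l) wbar * (wplus - wbar))
        ≤ -(η * (v - deriv (conj l) wbar)) * w
          + (conj l w - conj l wbar - deriv (conj l) wbar * (w - wbar))) :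
    HasDerivAt (conj l) ((1 - η) * deriv (conj l) wbar + η * v) wplus
      ∧ wplus = deriv l ((1 - η) * deriv (conj l) wbar + η * v) := by
  set t := (1 - η) * deriv (conj l) wbar + η * v
  have hopt : conj l wplus - t * wplus ≤ conj l (deriv l t) - t * deriv l t := by
    linear_combination hmin _ (deriv_mem_domConj hsc.convexOn (hdiff t))
  have hwplus := eq_deriv_of_conj_sub_mul_le hsc.convexOn (hdiff t) hwplusdom hopt
  exact ⟨hwplus ▸ hasDerivAt_conj_deriv hsc hdiff t, hwplus⟩

theorem stmt0 (l : ℝ → ℝ) (γ : ℝ) (hγ : 0 < γ)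
    (hdiff : Differentiable ℝ l)
    (hsc : StrictConvexOn ℝ Set.univ l)
    (hsmooth : ∀ a b : ℝ, |deriv l a - deriv l b| ≤ γ * |a - b|)
    (wbar : ℝ) (hwbar : DifferentiableAt ℝ (conj l) wbar)
    (η : ℝ) (hη : η ∈ Set.Ioc (0 : ℝ) 1) (v : ℝ)
    (wplus : ℝ) (hwplusdom : wplus ∈ domConj l)
    (hmin : ∀ w ∈ domConj l,
      -(η * (v - deriv (conj l) wbar)) * wplus
          + (conj l wplus - conj l wbar - deriv (conj l) wbar * (wplus - wbar))
        ≤ -(η * (v - deriv (conj l) wbar)) * w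
          + (conj l w - conj l wbar - deriv (conj l) wbar * (w - wbar))) :
    HasDerivAt (conj l) ((1 - η) * deriv (conj l) wbar + η * v) wplus
      ∧ wplus = deriv l ((1 - η) * deriv (conj l) wbar + η * v) :=
  stmt0_general l hdiff hsc wbar η v wplus hwplusdom hmin
end

section
/- Let n ≥ 1 be an integer and σ a real number with nσ > 1, and define α_i := (1/n)σ^i / (σ^{i+1} − (σ − 1/n)^{i+1}) for integers i ≥ 0. Given any sequence {β̃^i}_{i≥0} in ℝ^p, define β̄^{−1} := 0 and β̄^i := (1−α_i)β̄^{i−1} + α_i β̃^i for i ≥ 0. With weights γ_i := (nσ/(nσ−1))^i, for every k ≥ 0 one has β̄^k = (Σ_{i=0}^k γ_i β̃^i) / (Σ_{i=0}^k γ_i). -/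
theorem stmt6 (n p : ℕ) (hn : 1 ≤ n) (hp : 0 < p)
    (σ : ℝ) (hσ : 1 < (n : ℝ) * σ)
    (βt : ℕ → Fin p → ℝ)
    (α : ℕ → ℝ)
    (hα : ∀ i : ℕ, α i = (1 / (n : ℝ)) * σ ^ i
        / (σ ^ (i + 1) - (σ - 1 / (n : ℝ)) ^ (i + 1)))
    (βbar : ℕ → Fin p → ℝ)
    (h0 : βbar 0 = (1 - α 0) • (0 : Fin p → ℝ) + α 0 • βt 0)
    (hrec : ∀ i : ℕ, βbar (i + 1) = (1 - α (i + 1)) • βbar i + α (i + 1) • βt (i + 1))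
    (k : ℕ) :
    βbar k = (∑ i ∈ Finset.range (k + 1), ((n : ℝ) * σ / ((n : ℝ) * σ - 1)) ^ i)⁻¹
        • ∑ i ∈ Finset.range (k + 1), ((n : ℝ) * σ / ((n : ℝ) * σ - 1)) ^ i • βt i := by
  have ha0 : (0 : ℝ) < (n : ℝ) := by
    have : (1 : ℝ) ≤ (n : ℝ) := by exact_mod_cast hn
    linarith
  set a : ℝ := (n : ℝ) with hadef
  have hσ0 : 0 < σ := by
    by_contra h
    push_neg at h
    nlinarith
  have hB : 0 < a * σ - 1 := by linarith
  have hBne : a * σ - 1 ≠ 0 := ne_of_gt hB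
  have hane : a ≠ 0 := ne_of_gt ha0
  have hq1 : 1 < a * σ / (a * σ - 1) := by
    rw [lt_div_iff₀ hB]
    linarith
  have hq0 : 0 < a * σ / (a * σ - 1) := by linarith
  -- key closed form of α
  have hkey : ∀ i : ℕ, α i = (a * σ / (a * σ - 1)) ^ i
      / ∑ j ∈ Finset.range (i + 1), (a * σ / (a * σ - 1)) ^ j := by
    intro i
    have h1a : (0 : ℝ) < 1 / a := by positivity
    have hsb : 0 < σ - 1 / a := by
      have : 1 / a < σ := by
        rw [div_lt_iff₀ ha0]
        linarith [mul_comm σ a]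
      linarith
    have hpowlt : (σ - 1 / a) ^ (i + 1) < σ ^ (i + 1) :=
      pow_lt_pow_left₀ (by linarith) hsb.le (Nat.succ_ne_zero i)
    have hABlt : (a * σ - 1) ^ (i + 1) < (a * σ) ^ (i + 1) :=
      pow_lt_pow_left₀ (by linarith) hB.le (Nat.succ_ne_zero i)
    have hP : (0 : ℝ) < (a * σ) ^ (i + 1) - (a * σ - 1) ^ (i + 1) := by linarith
    have hPne := ne_of_gt hP
    have hBpow : (a * σ - 1) ^ i ≠ 0 := pow_ne_zero _ hBne
    have hBpow1 : (a * σ - 1) ^ (i + 1) ≠ 0 := pow_ne_zero _ hBne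
    have hapow : (a : ℝ) ^ (i + 1) ≠ 0 := pow_ne_zero _ hane
    have key2 : σ ^ (i + 1) - (σ - 1 / a) ^ (i + 1)
        = ((a * σ) ^ (i + 1) - (a * σ - 1) ^ (i + 1)) / a ^ (i + 1) := by
      rw [eq_div_iff hapow, sub_mul, ← mul_pow, ← mul_pow]
      have e1 : (σ - 1 / a) * a = a * σ - 1 := by
        field_simp
      rw [e1, mul_comm σ a]
    have key3 : ∑ j ∈ Finset.range (i + 1), (a * σ / (a * σ - 1)) ^ j
        = ((a * σ) ^ (i + 1) - (a * σ - 1) ^ (i + 1)) / (a * σ - 1) ^ i := by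
      rw [geom_sum_eq (ne_of_gt hq1) (i + 1), div_pow]
      have e2 : a * σ / (a * σ - 1) - 1 = 1 / (a * σ - 1) := by
        rw [div_sub_one hBne]
        congr 1
        ring
      rw [e2]
      field_simp
      ring
    rw [hα, key2, key3, div_pow]
    field_simp
    ring
  -- generalize q so that it is opaque
  suffices main : ∀ q : ℝ,
      (∀ m : ℕ, 0 < ∑ j ∈ Finset.range (m + 1), q ^ j) →
      (∀ i : ℕ, α i = q ^ i / ∑ j ∈ Finset.range (i + 1), q ^ j) →
      βbar k = (∑ i ∈ Finset.range (k + 1), q ^ i)⁻¹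
        • ∑ i ∈ Finset.range (k + 1), q ^ i • βt i by
    refine main (a * σ / (a * σ - 1)) (fun m => ?_) hkey
    apply Finset.sum_pos
    · intro i _
      positivity
    · exact ⟨0, Finset.mem_range.mpr (Nat.succ_pos m)⟩
  intro q hS hkq
  induction k with
  | zero =>
    have hα0 : α 0 = 1 := by
      rw [hkq 0]
      simp
    rw [h0, hα0]
    simp
  | succ k ih =>
    rw [hrec k, ih]
    have e := hkq (k + 1)
    have hSk : 0 < ∑ j ∈ Finset.range (k + 1), q ^ j := hS k
    have hSk1 : 0 < ∑ j ∈ Finset.range (k + 1 + 1), q ^ j := hS (k + 1)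
    rw [Finset.sum_range_succ] at hSk
    rw [Finset.sum_range_succ, Finset.sum_range_succ] at hSk1
    rw [Finset.sum_range_succ, Finset.sum_range_succ] at e
    funext x
    simp only [Pi.add_apply, Pi.smul_apply, Finset.sum_apply, smul_eq_mul,
      Finset.sum_range_succ]
    rw [e]
    have h1 := ne_of_gt hSk
    have h2 := ne_of_gt hSk1
    field_simp
    ring
end

section
/- Let f : ℝ^p → ℝ be convex and differentiable with ∇f Lipschitz continuous with constant 1/μ with respect to ‖·‖₂ (f playing the role of the conjugate R* of a μ-strongly convex R), and let h : ℝⁿ → ℝ be differentiable and (1/(nγ))-strongly convex with respect to ‖·‖₂. Define g(w) := f(−(1/n)Xᵀw). Then for every w ∈ ℝⁿ, every coordinate j ∈ {1,…,n}, and every t ∈ ℝ: g(w + t e_j) ≤ g(w) + t · (∂g/∂w_j)(w) + (γ‖x_j‖₂²/(nμ)) · D_h(w + t e_j, w). Consequently, the function F := g + h (which equals −D when f = R* and h(w) = (1/n)Σ l_j*(w_j)) is coordinate-wise σ-smooth relative to h with σ = γ·max_{1≤j≤n}‖x_j‖₂²/(nμ) + 1. -/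
/-!
The descent lemma for the `(1/μ)`-smooth `f`, applied along the line
`A (w + t e_j) = A w + t A e_j` with `A e_j = -x_j / n`, bounds the second-order term of `g` by
`t² ‖x_j‖² / (2 μ n²)`, while strong convexity of `h` bounds `t² / (2 n γ)` by
`D_h(w + t e_j, w)`. Adding `h` to `g` adds exactly its linear term plus `D_h`, whence `σ + 1`.
-/

/-- The Bregman distance of a differentiable reference function on Euclidean space. -/
noncomputable def bregE {n : ℕ} (h : EuclideanSpace ℝ (Fin n) → ℝ)
    (y x : EuclideanSpace ℝ (Fin n)) : ℝ :=
  h y - h x - (inner ℝ (gradient h x) (y - x) : ℝ)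

open scoped Gradient RealInnerProductSpace

section Descent

variable {E F : Type*} [NormedAddCommGroup E] [InnerProductSpace ℝ E] [CompleteSpace E]
  [NormedAddCommGroup F] [InnerProductSpace ℝ F] [CompleteSpace F]

theorem apply_add_le_of_lipschitz_gradient {f : F → ℝ} {L : ℝ} (hf : Differentiable ℝ f)
    (hL : ∀ y z, ‖∇ f y - ∇ f z‖ ≤ L * ‖y - z‖) (b v : F) :
    f (b + v) ≤ f b + ⟪∇ f b, v⟫ + L / 2 * ‖v‖ ^ 2 := by
  -- `ψ` is antitone on `[0, ∞)`: its derivative `⟪∇f (b + s v) - ∇f b, v⟫ - L s ‖v‖²` is `≤ 0`.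
  set ψ : ℝ → ℝ := fun s => f (b + s • v) - s * ⟪∇ f b, v⟫ - L / 2 * s ^ 2 * ‖v‖ ^ 2
  have hψ : ∀ s, HasDerivAt ψ (⟪∇ f (b + s • v), v⟫ - ⟪∇ f b, v⟫ - L * s * ‖v‖ ^ 2) s := by
    intro s
    have hline : HasDerivAt (fun s : ℝ => b + s • v) v s := by
      simpa using ((hasDerivAt_id s).smul_const v).const_add b
    have hfline := (hf (b + s • v)).hasGradientAt.hasFDerivAt.comp_hasDerivAt s hline
    exact ((hfline.sub ((hasDerivAt_id s).mul_const ⟪∇ f b, v⟫)).sub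
      (((hasDerivAt_pow 2 s).const_mul (L / 2)).mul_const (‖v‖ ^ 2))).congr_deriv
      (by simp only [InnerProductSpace.toDual_apply_apply]; ring)
  have hψ' : ∀ s ∈ interior (Set.Ici (0 : ℝ)),
      ⟪∇ f (b + s • v), v⟫ - ⟪∇ f b, v⟫ - L * s * ‖v‖ ^ 2 ≤ 0 := by
    intro s hs
    have hs : 0 ≤ s := (interior_Ici.subset hs).le
    have := calc ⟪∇ f (b + s • v), v⟫ - ⟪∇ f b, v⟫ = ⟪∇ f (b + s • v) - ∇ f b, v⟫ :=
          (inner_sub_left _ _ _).symm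
      _ ≤ ‖∇ f (b + s • v) - ∇ f b‖ * ‖v‖ := real_inner_le_norm _ _
      _ ≤ L * ‖(b + s • v) - b‖ * ‖v‖ := by gcongr; exact hL _ _
      _ = L * s * ‖v‖ ^ 2 := by
          rw [add_sub_cancel_left, norm_smul, Real.norm_of_nonneg hs]; ring
    linarith
  have := antitoneOn_of_hasDerivWithinAt_nonpos (convex_Ici 0)
    (fun s _ => (hψ s).continuousAt.continuousWithinAt)
    (fun s _ => (hψ s).hasDerivWithinAt) hψ' Set.self_mem_Ici (Set.mem_Ici.2 zero_le_one)
    zero_le_one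
  simp only [ψ, one_smul, zero_smul, add_zero] at this
  linarith

theorem apply_clm_add_smul_le_of_lipschitz_gradient {f : F → ℝ} {L : ℝ} (hf : Differentiable ℝ f)
    (hL : ∀ y z, ‖∇ f y - ∇ f z‖ ≤ L * ‖y - z‖) (A : E →L[ℝ] F) (w e : E) (t : ℝ) :
    f (A (w + t • e)) ≤ f (A w) + t * ⟪∇ (fun u => f (A u)) w, e⟫ + L / 2 * t ^ 2 * ‖A e‖ ^ 2 := by
  have hchain : ⟪∇ (fun u => f (A u)) w, e⟫ = ⟪∇ f (A w), A e⟫ := by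
    have hd : HasFDerivAt (fun u => f (A u)) ((fderiv ℝ f (A w)).comp A) w :=
      (hf (A w)).hasFDerivAt.comp w A.hasFDerivAt
    rw [inner_gradient_left, inner_gradient_left, hd.fderiv]
    rfl
  have := apply_add_le_of_lipschitz_gradient hf hL (A w) (t • A e)
  rw [map_add, map_smul, hchain]
  rw [inner_smul_right, norm_smul, mul_pow, Real.norm_eq_abs, sq_abs] at this
  linarith

end Descent

namespace EuclideanSpace

variable {n : ℕ}

theorem gradient_apply_eq_inner_single (φ : EuclideanSpace ℝ (Fin n) → ℝ)
    (w : EuclideanSpace ℝ (Fin n)) (j : Fin n) :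
    ∇ φ w j = ⟪∇ φ w, single j 1⟫ := by
  rw [inner_single_right]
  simp

theorem norm_smul_single_one_sq (t : ℝ) (j : Fin n) :
    ‖t • single j (1 : ℝ)‖ ^ 2 = t ^ 2 := by
  simp [norm_smul, PiLp.norm_single]

variable {F : Type*} [NormedAddCommGroup F] [InnerProductSpace ℝ F]

-- `w ↦ Xᵀ w` when `v` lists the rows `x j` of `X`.
noncomputable def linearCombinationCLM (v : Fin n → F) : EuclideanSpace ℝ (Fin n) →L[ℝ] F :=
  ∑ j, (proj j).smulRight (v j)

theorem linearCombinationCLM_apply (v : Fin n → F) (w : EuclideanSpace ℝ (Fin n)) :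
    linearCombinationCLM v w = ∑ j, w j • v j := by
  simp [linearCombinationCLM]

theorem linearCombinationCLM_single (v : Fin n → F) (j : Fin n) :
    linearCombinationCLM v (single j 1) = v j := by
  rw [linearCombinationCLM_apply, Finset.sum_eq_single j (fun i _ hi => by simp [hi]) (by simp)]
  simp

end EuclideanSpace

section Bregman

variable {n : ℕ} {h : EuclideanSpace ℝ (Fin n) → ℝ}

theorem mul_norm_sub_sq_le_bregE {m : ℝ}
    (hsc : ∀ y z, h y ≥ h z + ⟪∇ h z, y - z⟫ + m * ‖y - z‖ ^ 2) (y z : EuclideanSpace ℝ (Fin n)) :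
    m * ‖y - z‖ ^ 2 ≤ bregE h y z := by
  rw [bregE]
  linarith [hsc y z]

theorem add_smul_single_eq_add_bregE (w : EuclideanSpace ℝ (Fin n)) (j : Fin n) (t : ℝ) :
    h (w + t • EuclideanSpace.single j 1)
      = h w + t * ∇ h w j + bregE h (w + t • EuclideanSpace.single j 1) w := by
  rw [bregE, add_sub_cancel_left, real_inner_smul_right,
    ← EuclideanSpace.gradient_apply_eq_inner_single]
  ring

end Bregman

def CoordwiseRelSmooth {n : ℕ} (h : EuclideanSpace ℝ (Fin n) → ℝ) (σ : Fin n → ℝ)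
    (F : EuclideanSpace ℝ (Fin n) → ℝ) : Prop :=
  ∀ (w : EuclideanSpace ℝ (Fin n)) (j : Fin n) (t : ℝ),
    F (w + t • EuclideanSpace.single j 1)
      ≤ F w + t * ∇ F w j + σ j * bregE h (w + t • EuclideanSpace.single j 1) w

namespace CoordwiseRelSmooth

variable {n : ℕ} {h F : EuclideanSpace ℝ (Fin n) → ℝ} {σ τ : Fin n → ℝ}

theorem mono (hF : CoordwiseRelSmooth h σ F) (hστ : ∀ j, σ j ≤ τ j)
    (hh : ∀ y z, 0 ≤ bregE h y z) : CoordwiseRelSmooth h τ F := fun w j t =>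
  (hF w j t).trans (by gcongr; exacts [hh _ _, hστ j])

theorem add_ref (hF : CoordwiseRelSmooth h σ F) (hFd : Differentiable ℝ F)
    (hhd : Differentiable ℝ h) : CoordwiseRelSmooth h (fun j => σ j + 1) (fun u => F u + h u) := by
  intro w j t
  have hgrad : ∇ (fun u => F u + h u) w j = ∇ F w j + ∇ h w j := by
    rw [EuclideanSpace.gradient_apply_eq_inner_single, inner_gradient_left,
      fderiv_fun_add (hFd w) (hhd w), add_apply, ← inner_gradient_left,
      ← inner_gradient_left, ← EuclideanSpace.gradient_apply_eq_inner_single,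
      ← EuclideanSpace.gradient_apply_eq_inner_single]
  dsimp only
  rw [hgrad]
  linarith [hF w j t, add_smul_single_eq_add_bregE (h := h) w j t]

end CoordwiseRelSmooth

theorem coordwiseRelSmooth_comp_linearCombinationCLM {n : ℕ} {F : Type*} [NormedAddCommGroup F]
    [InnerProductSpace ℝ F] [CompleteSpace F] {f : F → ℝ} {L m : ℝ} (hf : Differentiable ℝ f)
    (hL : ∀ y z, ‖∇ f y - ∇ f z‖ ≤ L * ‖y - z‖) (hL0 : 0 ≤ L) (hm : 0 < m)
    {h : EuclideanSpace ℝ (Fin n) → ℝ}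
    (hsc : ∀ y z, h y ≥ h z + ⟪∇ h z, y - z⟫ + m * ‖y - z‖ ^ 2) (v : Fin n → F) :
    CoordwiseRelSmooth h (fun j => L * ‖v j‖ ^ 2 / (2 * m))
      (fun w => f (EuclideanSpace.linearCombinationCLM v w)) := by
  intro w j t
  set A := EuclideanSpace.linearCombinationCLM v
  calc f (A (w + t • EuclideanSpace.single j 1))
      ≤ f (A w) + t * ⟪∇ (fun u => f (A u)) w, EuclideanSpace.single j 1⟫
          + L / 2 * t ^ 2 * ‖A (EuclideanSpace.single j 1)‖ ^ 2 :=
        apply_clm_add_smul_le_of_lipschitz_gradient hf hL A w _ t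
    _ = f (A w) + t * ∇ (fun u => f (A u)) w j
          + L * ‖v j‖ ^ 2 / (2 * m) * (m * ‖(w + t • EuclideanSpace.single j 1) - w‖ ^ 2) := by
        rw [EuclideanSpace.gradient_apply_eq_inner_single,
          EuclideanSpace.linearCombinationCLM_single, add_sub_cancel_left,
          EuclideanSpace.norm_smul_single_one_sq]
        field_simp
    _ ≤ f (A w) + t * ∇ (fun u => f (A u)) w j
          + L * ‖v j‖ ^ 2 / (2 * m) * bregE h (w + t • EuclideanSpace.single j 1) w := by
        gcongr
        exact mul_norm_sub_sq_le_bregE hsc _ _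

theorem stmt8_general (n p : ℕ) [NeZero n]
    (x : Fin n → EuclideanSpace ℝ (Fin p)) (γ μ : ℝ) (hγ : 0 < γ) (hμ : 0 < μ)
    -- f plays the role of R*, convex with (1/μ)-Lipschitz gradient w.r.t. ‖·‖₂
    (f : EuclideanSpace ℝ (Fin p) → ℝ)
    (hfdiff : Differentiable ℝ f)
    (hflip : ∀ y z, ‖gradient f y - gradient f z‖ ≤ (1 / μ) * ‖y - z‖)
    -- h differentiable and (1/(nγ))-strongly convex w.r.t. ‖·‖₂
    (h : EuclideanSpace ℝ (Fin n) → ℝ) (hhdiff : Differentiable ℝ h)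
    (hhsc : ∀ y z, h y ≥ h z + (inner ℝ (gradient h z) (y - z) : ℝ)
        + (1 / (2 * (n : ℝ) * γ)) * ‖y - z‖ ^ 2)
    -- g(w) := f(−(1/n) Xᵀ w)
    (g : EuclideanSpace ℝ (Fin n) → ℝ)
    (hg : ∀ w, g w = f (WithLp.toLp 2 (fun i => -(1 / (n : ℝ)) * ∑ j, x j i * w j))) :
    (∀ (w : EuclideanSpace ℝ (Fin n)) (j : Fin n) (t : ℝ),
        g (w + t • EuclideanSpace.single j 1)
          ≤ g w + t * gradient g w j
            + (γ * ‖x j‖ ^ 2 / ((n : ℝ) * μ))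
              * bregE h (w + t • EuclideanSpace.single j 1) w)
      ∧ (∀ (w : EuclideanSpace ℝ (Fin n)) (j : Fin n) (t : ℝ),
          g (w + t • EuclideanSpace.single j 1) + h (w + t • EuclideanSpace.single j 1)
            ≤ g w + h w
              + t * gradient (fun u => g u + h u) w j
              + (γ * (Finset.univ.sup' Finset.univ_nonempty fun j' => ‖x j'‖ ^ 2)
                    / ((n : ℝ) * μ) + 1)
                * bregE h (w + t • EuclideanSpace.single j 1) w) := by
  have hn : (0 : ℝ) < n := Nat.cast_pos.2 (NeZero.pos n)
  set A := EuclideanSpace.linearCombinationCLM fun j => -(1 / (n : ℝ)) • x j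
  obtain rfl : g = fun w => f (A w) := funext fun w => by
    rw [hg, EuclideanSpace.linearCombinationCLM_apply]
    congr 1
    ext i
    simp only [WithLp.ofLp_sum, WithLp.ofLp_smul, Finset.sum_apply, Pi.smul_apply,
      smul_eq_mul, Finset.mul_sum]
    exact Finset.sum_congr rfl fun _ _ => by ring
  have hσ : (fun j => γ * ‖x j‖ ^ 2 / ((n : ℝ) * μ))
      = fun j => 1 / μ * ‖-(1 / (n : ℝ)) • x j‖ ^ 2 / (2 * (1 / (2 * (n : ℝ) * γ))) := by
    ext j
    rw [norm_smul, norm_neg, Real.norm_of_nonneg (by positivity)]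
    field_simp
  have hsmooth : CoordwiseRelSmooth h (fun j => γ * ‖x j‖ ^ 2 / ((n : ℝ) * μ))
      fun w => f (A w) := by
    rw [hσ]
    exact coordwiseRelSmooth_comp_linearCombinationCLM hfdiff hflip (by positivity)
      (by positivity) hhsc _
  refine ⟨hsmooth, (hsmooth.mono (fun j => ?_) (fun y z => ?_)).add_ref
    (hfdiff.comp A.differentiable) hhdiff⟩
  · gcongr
    exact Finset.le_sup' (fun j' => ‖x j'‖ ^ 2) (Finset.mem_univ j)
  · exact (by positivity : (0 : ℝ) ≤ _).trans (mul_norm_sub_sq_le_bregE hhsc y z)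

theorem stmt8 (n p : ℕ) [NeZero n] (hp : 0 < p)
    (x : Fin n → EuclideanSpace ℝ (Fin p)) (γ μ : ℝ) (hγ : 0 < γ) (hμ : 0 < μ)
    -- f plays the role of R*, convex with (1/μ)-Lipschitz gradient w.r.t. ‖·‖₂
    (f : EuclideanSpace ℝ (Fin p) → ℝ)
    (hfconv : ConvexOn ℝ Set.univ f) (hfdiff : Differentiable ℝ f)
    (hflip : ∀ y z, ‖gradient f y - gradient f z‖ ≤ (1 / μ) * ‖y - z‖)
    -- h differentiable and (1/(nγ))-strongly convex w.r.t. ‖·‖₂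
    (h : EuclideanSpace ℝ (Fin n) → ℝ) (hhdiff : Differentiable ℝ h)
    (hhsc : ∀ y z, h y ≥ h z + (inner ℝ (gradient h z) (y - z) : ℝ)
        + (1 / (2 * (n : ℝ) * γ)) * ‖y - z‖ ^ 2)
    -- g(w) := f(−(1/n) Xᵀ w)
    (g : EuclideanSpace ℝ (Fin n) → ℝ)
    (hg : ∀ w, g w = f (WithLp.toLp 2 (fun i => -(1 / (n : ℝ)) * ∑ j, x j i * w j))) :
    (∀ (w : EuclideanSpace ℝ (Fin n)) (j : Fin n) (t : ℝ),
        g (w + t • EuclideanSpace.single j 1)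
          ≤ g w + t * gradient g w j
            + (γ * ‖x j‖ ^ 2 / ((n : ℝ) * μ))
              * bregE h (w + t • EuclideanSpace.single j 1) w)
      ∧ (∀ (w : EuclideanSpace ℝ (Fin n)) (j : Fin n) (t : ℝ),
          g (w + t • EuclideanSpace.single j 1) + h (w + t • EuclideanSpace.single j 1)
            ≤ g w + h w
              + t * gradient (fun u => g u + h u) w j
              + (γ * (Finset.univ.sup' Finset.univ_nonempty fun j' => ‖x j'‖ ^ 2)
                    / ((n : ℝ) * μ) + 1)
                * bregE h (w + t • EuclideanSpace.single j 1) w) :=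
  stmt8_general n p x γ μ hγ hμ f hfdiff hflip h hhdiff hhsc g hg
end

section
/- Let h : ℝⁿ → ℝ be a differentiable separable function, h(x) = Σ_{i=1}^n h_i(x_i) with each h_i : ℝ → ℝ differentiable. Fix x, a, y ∈ ℝⁿ, and for each j ∈ {1,…,n} define b^{(j)} ∈ ℝⁿ by b^{(j)}_j := a_j and b^{(j)}_i := x_i for i ≠ j. Then D_h(y, a) − D_h(y, x) = Σ_{j=1}^n ( D_h(y, b^{(j)}) − D_h(y, x) ); equivalently, D_h(y, a) − D_h(y, x) = n · E_j[ D_h(y, b^{(j)}) − D_h(y, x) ] where the expectation is over j uniform on {1,…,n}. -/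
/-- Bregman distance of a differentiable separable function `h(x) = ∑ᵢ hᵢ(xᵢ)`. -/
noncomputable def bregS (n : ℕ) (h : Fin n → ℝ → ℝ) (y x : Fin n → ℝ) : ℝ :=
  ∑ i, (h i (y i) - h i (x i) - deriv (h i) (x i) * (y i - x i))

theorem stmt9 (n : ℕ) (hn : 0 < n)
    (h : Fin n → ℝ → ℝ) (hdiff : ∀ i, Differentiable ℝ (h i))
    (x a y : Fin n → ℝ) :
    bregS n h y a - bregS n h y x
        = ∑ j, (bregS n h y (Function.update x j (a j)) - bregS n h y x)
      ∧ bregS n h y a - bregS n h y x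
        = (n : ℝ) * ((1 / (n : ℝ))
            * ∑ j, (bregS n h y (Function.update x j (a j)) - bregS n h y x)) := by
  set g : Fin n → (Fin n → ℝ) → ℝ :=
    fun i z => h i (y i) - h i (z i) - deriv (h i) (z i) * (y i - z i) with hg
  have key : ∀ j, bregS n h y (Function.update x j (a j)) - bregS n h y x
      = g j a - g j x := by
    intro j
    unfold bregS
    rw [← Finset.sum_sub_distrib]
    rw [Finset.sum_eq_single j]
    · simp [hg, Function.update_self]
    · intro i _ hij
      simp [hg, Function.update_of_ne hij]
    · simp
  have main : bregS n h y a - bregS n h y x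
      = ∑ j, (bregS n h y (Function.update x j (a j)) - bregS n h y x) := by
    simp only [key]
    unfold bregS
    rw [← Finset.sum_sub_distrib]
  refine ⟨main, ?_⟩
  rw [main]
  field_simp
end

section
/- (Per-step dual monotonicity.) Let h : ℝⁿ → ℝ be differentiable and convex, and let F : ℝⁿ → ℝ be differentiable and coordinate-wise σ-smooth relative to h for some σ > 0. Fix w ∈ ℝⁿ and a coordinate j ∈ {1,…,n}, and let w⁺ be any minimizer of u ↦ ⟨(1/σ)∇F(w), u − w⟩ + D_h(u, w) over the set of points u that agree with w in every coordinate except possibly the j-th. Then F(w⁺) ≤ F(w). In particular, taking F = −D, each coordinate mirror-descent step with step size 1/σ does not decrease the dual objective D. -/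
/-- The Bregman distance of a differentiable reference function on `ℝⁿ`. -/
noncomputable def bregF {n : ℕ} (h : (Fin n → ℝ) → ℝ) (y x : Fin n → ℝ) : ℝ :=
  h y - h x - fderiv ℝ h x (y - x)

theorem stmt14 (n : ℕ) (hn : 0 < n)
    (h : (Fin n → ℝ) → ℝ) (hhdiff : Differentiable ℝ h)
    (hhconv : ConvexOn ℝ Set.univ h)
    (F : (Fin n → ℝ) → ℝ) (hFdiff : Differentiable ℝ F)
    (σ : ℝ) (hσ : 0 < σ)
    (hsmooth : ∀ (w : Fin n → ℝ) (j : Fin n) (t : ℝ),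
      F (w + Pi.single j t)
        ≤ F w + t * fderiv ℝ F w (Pi.single j 1)
          + σ * bregF h (w + Pi.single j t) w)
    (w : Fin n → ℝ) (j : Fin n) (tplus : ℝ)
    (hmin : ∀ t : ℝ,
      (1 / σ) * fderiv ℝ F w (Function.update w j tplus - w)
          + bregF h (Function.update w j tplus) w
        ≤ (1 / σ) * fderiv ℝ F w (Function.update w j t - w)
          + bregF h (Function.update w j t) w) :
    F (Function.update w j tplus) ≤ F w := by
  set t : ℝ := tplus - w j with ht
  have hupd : Function.update w j tplus = w + Pi.single j t := by
    funext i
    rcases eq_or_ne i j with hi | hi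
    · subst hi; simp [ht]
    · simp [Function.update_of_ne hi, Pi.single_eq_of_ne hi]
  have h0 : Function.update w j (w j) = w := Function.update_eq_self j w
  have hmin0 := hmin (w j)
  rw [h0, sub_self] at hmin0
  have hbreg0 : bregF h w w = 0 := by
    simp [bregF]
  rw [hbreg0, map_zero, mul_zero, zero_add] at hmin0
  -- hmin0 : (1/σ) * fderiv F w (u - w) + bregF h u w ≤ 0
  have hlin : fderiv ℝ F w (Function.update w j tplus - w) =
      t * fderiv ℝ F w (Pi.single j 1) := by
    have : Function.update w j tplus - w = t • (Pi.single j (1:ℝ) : Fin n → ℝ) := by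
      rw [hupd]
      funext i
      rcases eq_or_ne i j with hi | hi
      · subst hi; simp
      · simp [Pi.single_eq_of_ne hi]
    rw [this, map_smul, smul_eq_mul]
  have hkey : t * fderiv ℝ F w (Pi.single j 1)
      + σ * bregF h (Function.update w j tplus) w ≤ 0 := by
    have := mul_le_mul_of_nonneg_left hmin0 (le_of_lt hσ)
    rw [mul_zero] at this
    calc t * fderiv ℝ F w (Pi.single j 1) + σ * bregF h (Function.update w j tplus) w
        = σ * ((1 / σ) * fderiv ℝ F w (Function.update w j tplus - w)
            + bregF h (Function.update w j tplus) w) := by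
          rw [hlin]; field_simp
      _ ≤ 0 := this
  have hs := hsmooth w j t
  rw [← hupd] at hs
  linarith
end

section
/- (Equivalence Lemma.) Fix an infinite index sequence j_0, j_1, … in {1,…,n}, step sizes η_i ∈ (0,1], and an oracle B with B(d) ∈ argmin_β { dᵀβ + R(β) } for every d. Define the primal (stochastic Frank-Wolfe) iterates: s⁰ := 0 ∈ ℝⁿ; d^i := (1/n)Σ_{j=1}^n l_j'(s^i_j)·x_j; β̃^i := B(d^i); and s^{i+1}_{j_i} := (1−η_i)s^i_{j_i} + η_i·x_{j_i}ᵀβ̃^i with s^{i+1}_m := s^i_m for m ≠ j_i. Define the dual (randomized coordinate mirror descent) iterates: w⁰_m := l_m'(0) for every m; and w^{i+1}_{j_i} := l_{j_i}'((1−η_i)(l_{j_i}*)'(w^i_{j_i}) + η_i·x_{j_i}ᵀβ̃^i) with w^{i+1}_m := w^i_m for m ≠ j_i. Then for every i ≥ 0 and every coordinate m: w^i_m = l_m'(s^i_m), s^i_m = (l_m*)'(w^i_m), and d^i = (1/n)Xᵀ w^i; in particular, the linear-optimization subproblem argmin_β { (d^i)ᵀβ + R(β) } of the primal algorithm coincides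 with the subproblem argmin_β { (1/n)(w^i)ᵀXβ + R(β) } of the dual algorithm, so the two algorithms generate the same sequence {β̃^i} under the same oracle selection. -/
lemma subgrad (f : ℝ → ℝ) (hd : Differentiable ℝ f) (hc : ConvexOn ℝ Set.univ f)
    (t s : ℝ) : f t + deriv f t * (s - t) ≤ f s := by
  rcases lt_trichotomy t s with h | h | h
  · have h1 := hc.deriv_le_slope (Set.mem_univ t) (Set.mem_univ s) h (hd t)
    rw [slope_def_field] at h1
    have h2 : 0 < s - t := by linarith
    have h3 : deriv f t * (s - t) ≤ f s - f t := by
      calc deriv f t * (s - t) ≤ (f s - f t) / (s - t) * (s - t) := by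
            exact mul_le_mul_of_nonneg_right h1 (le_of_lt h2)
        _ = f s - f t := div_mul_cancel₀ _ (ne_of_gt h2)
    linarith
  · simp [h]
  · have h1 := hc.slope_le_deriv (Set.mem_univ s) (Set.mem_univ t) h (hd t)
    rw [slope_def_field] at h1
    have h2 : 0 < t - s := by linarith
    have h3 : f t - f s ≤ deriv f t * (t - s) := by
      calc f t - f s = (f t - f s) / (t - s) * (t - s) := (div_mul_cancel₀ _ (ne_of_gt h2)).symm
        _ ≤ deriv f t * (t - s) := mul_le_mul_of_nonneg_right h1 (le_of_lt h2)
    nlinarith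

lemma key_est (f : ℝ → ℝ) (hd : Differentiable ℝ f) (hsc : StrictConvexOn ℝ Set.univ f)
    (a δ : ℝ) (hδ : 0 < δ) (h c : ℝ)
    (hc1 : c ≤ deriv f (a + δ) - deriv f a) (hc2 : c ≤ deriv f a - deriv f (a - δ))
    (hh : |h| ≤ c) (s : ℝ) :
    (deriv f a + h) * s - f s ≤ (deriv f a + h) * a - f a + δ * |h| := by
  have hcv := hsc.convexOn
  have hD : 0 ≤ f s - f a - deriv f a * (s - a) := by
    have := subgrad f hd hcv a s; linarith
  have habs1 : h ≤ |h| := le_abs_self h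
  have habs2 : -h ≤ |h| := neg_le_abs h
  have habs0 : 0 ≤ |h| := abs_nonneg h
  rcases le_or_gt (|s - a|) δ with hcase | hcase
  · have h1 : s - a ≤ δ := le_trans (le_abs_self _) hcase
    have h2 : -(s - a) ≤ δ := le_trans (neg_le_abs _) hcase
    have hprod : h * (s - a) ≤ |h| * δ := by
      calc h * (s - a) ≤ |h * (s - a)| := le_abs_self _
        _ = |h| * |s - a| := abs_mul _ _
        _ ≤ |h| * δ := mul_le_mul_of_nonneg_left hcase habs0
    nlinarith [hprod, hD]
  · rcases lt_or_ge δ (s - a) with hgt | hle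
    · -- s - a > δ
      have hsub1 := subgrad f hd hcv (a + δ) s
      have hsub2 := subgrad f hd hcv a (a + δ)
      -- D ≥ (f'(a+δ) - f'(a)) (s - a - δ) ≥ c (s - a - δ)
      have hDlow : c * (s - a - δ) ≤ f s - f a - deriv f a * (s - a) := by
        nlinarith [mul_le_mul_of_nonneg_right hc1 (by linarith : (0:ℝ) ≤ s - a - δ)]
      nlinarith [mul_le_mul_of_nonneg_right hh (by linarith : (0:ℝ) ≤ s - a - δ)]
    · -- s - a < -δ
      have hgt : a - s > δ := by
        rcases abs_cases (s - a) with ⟨he, _⟩ | ⟨he, _⟩ <;> [linarith; linarith]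
      have hsub1 := subgrad f hd hcv (a - δ) s
      have hsub2 := subgrad f hd hcv a (a - δ)
      have hDlow : c * (a - s - δ) ≤ f s - f a - deriv f a * (s - a) := by
        nlinarith [mul_le_mul_of_nonneg_right hc2 (by linarith : (0:ℝ) ≤ a - s - δ)]
      nlinarith [mul_le_mul_of_nonneg_right hh (by linarith : (0:ℝ) ≤ a - s - δ)]

lemma conj_at (f : ℝ → ℝ) (hd : Differentiable ℝ f) (hsc : StrictConvexOn ℝ Set.univ f)
    (a : ℝ) : conj f (deriv f a) = deriv f a * a - f a := by
  have hcv := hsc.convexOn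
  apply le_antisymm
  · apply csSup_le (Set.range_nonempty _)
    rintro y ⟨s, rfl⟩
    have := subgrad f hd hcv a s
    simp only
    nlinarith
  · have hbdd : BddAbove (Set.range fun s => deriv f a * s - f s) := by
      refine ⟨deriv f a * a - f a, ?_⟩
      rintro y ⟨s, rfl⟩
      have := subgrad f hd hcv a s
      simp only
      nlinarith
    have := le_csSup hbdd (Set.mem_range_self a)
    simpa [conj] using this

lemma conj_hasDerivAt (f : ℝ → ℝ) (hd : Differentiable ℝ f)
    (hsc : StrictConvexOn ℝ Set.univ f) (a : ℝ) :
    HasDerivAt (conj f) a (deriv f a) := by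
  rw [hasDerivAt_iff_isLittleO]
  rw [Asymptotics.isLittleO_iff]
  intro ε hε
  have hmono := hsc.strictMonoOn_deriv (fun x _ => hd x)
  set δ := ε with hδdef
  have hc1 : 0 < deriv f (a + δ) - deriv f a := by
    have := hmono (Set.mem_univ a) (Set.mem_univ (a + δ)) (by linarith)
    linarith
  have hc2 : 0 < deriv f a - deriv f (a - δ) := by
    have := hmono (Set.mem_univ (a - δ)) (Set.mem_univ a) (by linarith)
    linarith
  set c := min (deriv f (a + δ) - deriv f a) (deriv f a - deriv f (a - δ)) with hcdef
  have hcpos : 0 < c := lt_min hc1 hc2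
  rw [Metric.eventually_nhds_iff]
  refine ⟨c, hcpos, fun y hy => ?_⟩
  set h := y - deriv f a with hhdef
  have hhc : |h| ≤ c := by
    rw [Real.dist_eq] at hy; exact le_of_lt hy
  have hest := key_est f hd hsc a δ hε h c (min_le_left _ _) (min_le_right _ _) hhc
  have hy' : y = deriv f a + h := by ring
  -- upper bound on conj f y
  have hbdd : BddAbove (Set.range fun s => y * s - f s) := by
    refine ⟨(deriv f a + h) * a - f a + δ * |h|, ?_⟩
    rintro z ⟨s, rfl⟩
    simp only
    rw [hy']; exact hest s
  have hub : conj f y ≤ (deriv f a + h) * a - f a + δ * |h| := by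
    apply csSup_le (Set.range_nonempty _)
    rintro z ⟨s, rfl⟩
    simp only
    rw [hy']; exact hest s
  have hlb : (deriv f a + h) * a - f a ≤ conj f y := by
    have := le_csSup hbdd (Set.mem_range_self a)
    rw [hy'] at this ⊢; exact this
  have hval := conj_at f hd hsc a
  rw [Real.norm_eq_abs, Real.norm_eq_abs, smul_eq_mul, abs_le]
  have hnn : 0 ≤ ε * |y - deriv f a| := mul_nonneg hε.le (abs_nonneg _)
  have habsy : |y - deriv f a| = |h| := rfl
  constructor
  · rw [habsy]; nlinarith [hlb, hval, abs_nonneg h]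
  · rw [habsy]; nlinarith [hub, hval]

/-- The substitute gradient `d = (1/n) Xᵀ ∇L(s) = (1/n) ∑ⱼ lⱼ'(sⱼ) xⱼ`. -/
noncomputable def dvec (n p : ℕ) (x : Fin n → Fin p → ℝ) (l : Fin n → ℝ → ℝ)
    (s : Fin n → ℝ) : Fin p → ℝ :=
  fun c => (1 / (n : ℝ)) * ∑ m, deriv (l m) (s m) * x m c

/-- The dual cost vector `(1/n) Xᵀ w`. -/
noncomputable def dualCost (n p : ℕ) (x : Fin n → Fin p → ℝ)
    (w : Fin n → ℝ) : Fin p → ℝ :=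
  fun c => (1 / (n : ℝ)) * ∑ m, w m * x m c

theorem stmt17 (n p : ℕ) (hn : 0 < n) (hp : 0 < p)
    (x : Fin n → Fin p → ℝ) (l : Fin n → ℝ → ℝ) (γ : ℝ) (hγ : 0 < γ)
    (hdiff : ∀ j, Differentiable ℝ (l j))
    (hsc : ∀ j, StrictConvexOn ℝ Set.univ (l j))
    (hsmooth : ∀ j, ∀ a b : ℝ, |deriv (l j) a - deriv (l j) b| ≤ γ * |a - b|)
    (domR : Set (Fin p → ℝ)) (hbdd : Bornology.IsBounded domR)
    (hconvdom : Convex ℝ domR) (h0R : (0 : Fin p → ℝ) ∈ domR)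
    (R : (Fin p → ℝ) → ℝ)
    -- the oracle B with B(d) ∈ argmin_β { dᵀβ + R(β) } for every d
    (B : (Fin p → ℝ) → Fin p → ℝ)
    (hB : ∀ d, B d ∈ domR ∧ ∀ β ∈ domR,
      (∑ c, d c * B d c) + R (B d) ≤ (∑ c, d c * β c) + R β)
    -- index sequence and step sizes
    (jseq : ℕ → Fin n) (η : ℕ → ℝ) (hη : ∀ i, η i ∈ Set.Ioc (0 : ℝ) 1)
    -- primal (stochastic Frank-Wolfe) iterates
    (s : ℕ → Fin n → ℝ) (hs0 : ∀ m, s 0 m = 0)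
    (hsrec : ∀ i : ℕ, s (i + 1) = Function.update (s i) (jseq i)
      ((1 - η i) * s i (jseq i)
        + η i * ∑ c, x (jseq i) c * B (dvec n p x l (s i)) c))
    -- dual (randomized coordinate mirror descent) iterates
    (w : ℕ → Fin n → ℝ) (hw0 : ∀ m, w 0 m = deriv (l m) 0)
    (hwrec : ∀ i : ℕ, w (i + 1) = Function.update (w i) (jseq i)
      (deriv (l (jseq i))
        ((1 - η i) * deriv (conj (l (jseq i))) (w i (jseq i))
          + η i * ∑ c, x (jseq i) c * B (dualCost n p x (w i)) c))) :
    ∀ i : ℕ,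
      (∀ m, w i m = deriv (l m) (s i m) ∧ s i m = deriv (conj (l m)) (w i m))
      ∧ dvec n p x l (s i) = dualCost n p x (w i)
      ∧ B (dvec n p x l (s i)) = B (dualCost n p x (w i)) := by
  have hkey : ∀ (m : Fin n) (t : ℝ), deriv (conj (l m)) (deriv (l m) t) = t :=
    fun m t => (conj_hasDerivAt (l m) (hdiff m) (hsc m) t).deriv
  have hpack : ∀ i : ℕ, (∀ m, w i m = deriv (l m) (s i m)) →
      (∀ m, w i m = deriv (l m) (s i m) ∧ s i m = deriv (conj (l m)) (w i m))
      ∧ dvec n p x l (s i) = dualCost n p x (w i)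
      ∧ B (dvec n p x l (s i)) = B (dualCost n p x (w i)) := by
    intro i hP
    have hdc : dvec n p x l (s i) = dualCost n p x (w i) := by
      funext c
      unfold dvec dualCost
      congr 1
      exact Finset.sum_congr rfl fun m _ => by rw [hP m]
    exact ⟨fun m => ⟨hP m, by rw [hP m, hkey]⟩, hdc, congrArg B hdc⟩
  intro i
  induction i with
  | zero =>
    exact hpack 0 fun m => by rw [hw0 m, hs0 m]
  | succ i ih =>
    obtain ⟨h1, h2, h3⟩ := ih
    apply hpack
    intro m
    rw [hsrec i, hwrec i]
    by_cases hm : m = jseq i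
    · subst hm
      rw [Function.update_self, Function.update_self, ← h2, ← (h1 (jseq i)).2]
    · rw [Function.update_of_ne hm, Function.update_of_ne hm]
      exact (h1 m).1
end

section
/- (Iterate boundedness invariant.) Fix any infinite index sequence j_0, j_1, … in {1,…,n} and step sizes η_i ∈ (0,1], and consider the dual iterates: w⁰_m := l_m'(0) for every m; β̃^i := B(w^i) where B(w) ∈ argmin_β { (1/n)wᵀXβ + R(β) }; and w^{i+1}_{j_i} := l_{j_i}'((1−η_i)(l_{j_i}*)'(w^i_{j_i}) + η_i·x_{j_i}ᵀβ̃^i) with w^{i+1}_m := w^i_m for m ≠ j_i. Then for every iteration i ≥ 0 and every coordinate m ∈ {1,…,n}: |(l_m*)'(w^i_m)| ≤ M and |w^i_m − w⁰_m| ≤ γM. -/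
open Filter Topology

lemma supp_line {f : ℝ → ℝ} (hc : ConvexOn ℝ Set.univ f) (hd : Differentiable ℝ f)
    (b s : ℝ) : deriv f b * (s - b) ≤ f s - f b := by
  rcases lt_trichotomy b s with h | h | h
  · have := hc.deriv_le_slope (Set.mem_univ b) (Set.mem_univ s) h (hd b)
    rw [slope_def_field] at this
    have hpos : 0 < s - b := by linarith
    calc deriv f b * (s - b) ≤ (f s - f b) / (s - b) * (s - b) :=
          mul_le_mul_of_nonneg_right this hpos.le
      _ = f s - f b := by field_simp
  · simp [h]
  · have := hc.slope_le_deriv (Set.mem_univ s) (Set.mem_univ b) h (hd b)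
    rw [slope_def_field] at this
    have hpos : 0 < b - s := by linarith
    have h2 : f b - f s ≤ deriv f b * (b - s) := by
      calc f b - f s = (f b - f s) / (b - s) * (b - s) := by field_simp
        _ ≤ deriv f b * (b - s) := mul_le_mul_of_nonneg_right this hpos.le
    nlinarith

lemma conj_isGreatest {f : ℝ → ℝ} (hc : ConvexOn ℝ Set.univ f) (hd : Differentiable ℝ f)
    (b : ℝ) : IsGreatest (Set.range fun s => deriv f b * s - f s) (deriv f b * b - f b) := by
  constructor
  · exact ⟨b, rfl⟩
  · rintro y ⟨s, rfl⟩
    have := supp_line hc hd b s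
    dsimp only
    nlinarith

lemma conj_eq {f : ℝ → ℝ} (hc : ConvexOn ℝ Set.univ f) (hd : Differentiable ℝ f)
    (b : ℝ) : conj f (deriv f b) = deriv f b * b - f b :=
  (conj_isGreatest hc hd b).csSup_eq

lemma hasDerivAt_conj {f : ℝ → ℝ} (hsc : StrictConvexOn ℝ Set.univ f) (hd : Differentiable ℝ f)
    (hcont : Continuous (deriv f)) (a : ℝ) : HasDerivAt (conj f) a (deriv f a) := by
  have hc : ConvexOn ℝ Set.univ f := hsc.convexOn
  have hmono : StrictMonoOn (deriv f) Set.univ := hsc.strictMonoOn_deriv fun x _ => hd x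
  rw [hasDerivAt_iff_isLittleO, Asymptotics.isLittleO_iff]
  intro c hc0
  have h1 : deriv f (a - c) < deriv f a := hmono trivial trivial (by linarith)
  have h2 : deriv f a < deriv f (a + c) := hmono trivial trivial (by linarith)
  have hnb : Set.Ioo (deriv f (a - c)) (deriv f (a + c)) ∈ 𝓝 (deriv f a) :=
    Ioo_mem_nhds h1 h2
  filter_upwards [hnb] with v hv
  have hsub : Set.Ioo (deriv f (a - c)) (deriv f (a + c)) ⊆ deriv f '' Set.Ioo (a - c) (a + c) :=
    intermediate_value_Ioo (by linarith) hcont.continuousOn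
  obtain ⟨b, hb, hbv⟩ := hsub hv
  have e1 : conj f v = v * b - f b := by rw [← hbv]; exact conj_eq hc hd b
  have e2 : conj f (deriv f a) = deriv f a * a - f a := conj_eq hc hd a
  have l1 : v * a - f a ≤ conj f v := by
    rw [← hbv]
    exact le_csSup (conj_isGreatest hc hd b).bddAbove ⟨a, rfl⟩
  have l2 : deriv f a * b - f b ≤ conj f (deriv f a) :=
    le_csSup (conj_isGreatest hc hd a).bddAbove ⟨b, rfl⟩
  rw [Real.norm_eq_abs, Real.norm_eq_abs, smul_eq_mul]
  have hD0 : 0 ≤ conj f v - conj f (deriv f a) - (v - deriv f a) * a := by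
    rw [e2]; nlinarith [l1]
  have hDu : conj f v - conj f (deriv f a) - (v - deriv f a) * a ≤ (v - deriv f a) * (b - a) := by
    rw [e1]; nlinarith [l2]
  rw [abs_of_nonneg hD0]
  have hba : |b - a| ≤ c := abs_le.mpr ⟨by linarith [hb.1], by linarith [hb.2]⟩
  calc conj f v - conj f (deriv f a) - (v - deriv f a) * a
      ≤ (v - deriv f a) * (b - a) := hDu
    _ ≤ |(v - deriv f a) * (b - a)| := le_abs_self _
    _ = |v - deriv f a| * |b - a| := abs_mul _ _
    _ ≤ |v - deriv f a| * c := mul_le_mul_of_nonneg_left hba (abs_nonneg _)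
    _ = c * |v - deriv f a| := mul_comm _ _

lemma deriv_conj_eq {f : ℝ → ℝ} (hsc : StrictConvexOn ℝ Set.univ f) (hd : Differentiable ℝ f)
    (hcont : Continuous (deriv f)) (a : ℝ) : deriv (conj f) (deriv f a) = a :=
  (hasDerivAt_conj hsc hd hcont a).deriv

theorem stmt18 (n p : ℕ) (hn : 0 < n) (hp : 0 < p)
    (x : Fin n → Fin p → ℝ) (l : Fin n → ℝ → ℝ) (γ : ℝ) (hγ : 0 < γ)
    (hdiff : ∀ j, Differentiable ℝ (l j))
    (hsc : ∀ j, StrictConvexOn ℝ Set.univ (l j))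
    (hsmooth : ∀ j, ∀ a b : ℝ, |deriv (l j) a - deriv (l j) b| ≤ γ * |a - b|)
    (domR : Set (Fin p → ℝ)) (hbdd : Bornology.IsBounded domR)
    (hconvdom : Convex ℝ domR) (h0R : (0 : Fin p → ℝ) ∈ domR)
    (R : (Fin p → ℝ) → ℝ)
    (M : ℝ) (hM : ∀ β ∈ domR, ∀ j, |∑ i, x j i * β i| ≤ M)
    -- the oracle B with B(w) ∈ argmin_β { (1/n)wᵀXβ + R(β) }
    (B : (Fin n → ℝ) → Fin p → ℝ)
    (hB : ∀ v, B v ∈ domR ∧ ∀ β ∈ domR,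
      (∑ c, dualCost n p x v c * B v c) + R (B v)
        ≤ (∑ c, dualCost n p x v c * β c) + R β)
    -- index sequence and step sizes
    (jseq : ℕ → Fin n) (η : ℕ → ℝ) (hη : ∀ i, η i ∈ Set.Ioc (0 : ℝ) 1)
    -- dual iterates
    (w : ℕ → Fin n → ℝ) (hw0 : ∀ m, w 0 m = deriv (l m) 0)
    (hwrec : ∀ i : ℕ, w (i + 1) = Function.update (w i) (jseq i)
      (deriv (l (jseq i))
        ((1 - η i) * deriv (conj (l (jseq i))) (w i (jseq i))
          + η i * ∑ c, x (jseq i) c * B (w i) c))) :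
    ∀ (i : ℕ) (m : Fin n),
      |deriv (conj (l m)) (w i m)| ≤ M ∧ |w i m - w 0 m| ≤ γ * M := by
  have hcont : ∀ m, Continuous (deriv (l m)) := by
    intro m
    have : LipschitzWith ⟨γ, hγ.le⟩ (deriv (l m)) := by
      apply LipschitzWith.of_dist_le_mul
      intro a b
      rw [Real.dist_eq, Real.dist_eq]
      exact hsmooth m a b
    exact this.continuous
  have hM0 : 0 ≤ M := by
    have := hM 0 h0R ⟨0, hn⟩
    simpa using this
  have key : ∀ i, ∃ a : Fin n → ℝ, (∀ m, |a m| ≤ M) ∧ ∀ m, w i m = deriv (l m) (a m) := by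
    intro i
    induction i with
    | zero =>
      refine ⟨0, fun m => by simpa using hM0, fun m => by simpa using hw0 m⟩
    | succ i ih =>
      obtain ⟨a, habd, haw⟩ := ih
      have hS : |∑ c, x (jseq i) c * B (w i) c| ≤ M := hM _ (hB (w i)).1 (jseq i)
      have hde : deriv (conj (l (jseq i))) (w i (jseq i)) = a (jseq i) := by
        rw [haw (jseq i)]
        exact deriv_conj_eq (hsc _) (hdiff _) (hcont _) _
      obtain ⟨hη0, hη1⟩ := hη i
      refine ⟨Function.update a (jseq i)
        ((1 - η i) * a (jseq i) + η i * ∑ c, x (jseq i) c * B (w i) c), ?_, ?_⟩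
      · intro m
        rcases eq_or_ne m (jseq i) with rfl | hm
        · rw [Function.update_self]
          calc |(1 - η i) * a (jseq i) + η i * ∑ c, x (jseq i) c * B (w i) c|
              ≤ |(1 - η i) * a (jseq i)| + |η i * ∑ c, x (jseq i) c * B (w i) c| := abs_add_le _ _
            _ = (1 - η i) * |a (jseq i)| + η i * |∑ c, x (jseq i) c * B (w i) c| := by
                rw [abs_mul, abs_mul, abs_of_nonneg (by linarith : (0:ℝ) ≤ 1 - η i),
                  abs_of_nonneg hη0.le]
            _ ≤ (1 - η i) * M + η i * M := by
                have h1 : (0:ℝ) ≤ 1 - η i := by linarith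
                have := habd (jseq i)
                gcongr
            _ = M := by ring
        · rw [Function.update_of_ne hm]; exact habd m
      · intro m
        rw [hwrec i]
        rcases eq_or_ne m (jseq i) with rfl | hm
        · rw [Function.update_self, Function.update_self, hde]
        · rw [Function.update_of_ne hm, Function.update_of_ne hm]; exact haw m
  intro i m
  obtain ⟨a, habd, haw⟩ := key i
  constructor
  · rw [haw m, deriv_conj_eq (hsc m) (hdiff m) (hcont m)]
    exact habd m
  · rw [haw m, hw0 m]
    calc |deriv (l m) (a m) - deriv (l m) 0| ≤ γ * |a m - 0| := hsmooth m _ _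
      _ = γ * |a m| := by rw [sub_zero]
      _ ≤ γ * M := mul_le_mul_of_nonneg_left (habd m) hγ.le
end
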